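/- Let (E^σ_m) ⊆ (F^σ_m) be an elementary injection of families of multifiltrations with parameters (k_0, σ_0, m_0), with k_0 ≤ n−1. Let ρ be a ray of Σ not belonging to σ_0(1), so that τ := σ_0 + ρ is a cone of Σ, and choose w ∈ M with ⟨w, u_{ρ'}⟩ = 0 for every ρ' ∈ σ_0(1) and ⟨w, u_ρ⟩ = 1. Then there exists a ∈ ℤ such that for every i ∈ ℤ: dim_ℂ F^{τ}_{m_0 + i·w} = dim_ℂ E^{τ}_{m_0 + i·w} + 1 if and only if i ≥ a (and dim_ℂ F^{τ}_{m_0 + i·w} = dim_ℂ E^{τ}_{m_0 + i·w} for i < a). This integer a is independent of the choice of w. -/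
import Mathlib


open Finset

namespace Toric

/-- Primitive ray generators of the fan of `ℙⁿ`: `u 0 = -(e₁+⋯+eₙ)` and `u (i+1) = e_{i+1}`. -/
def uGen (n : ℕ) : Fin (n + 1) → Fin n → ℤ :=
  Fin.cons (fun _ => -1) fun k => Pi.single k 1

/-- The duality pairing `⟨m, u_i⟩` for `m ∈ M = ℤⁿ`. -/
def pair (n : ℕ) (m : Fin n → ℤ) (i : Fin (n + 1)) : ℤ :=
  ∑ j, m j * uGen n i j

/-- A cone of the fan of `ℙⁿ`: a proper subset of the set `{0, …, n}` of rays. -/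
abbrev Cone (n : ℕ) : Type := {I : Finset (Fin (n + 1)) // I ≠ Finset.univ}

/-- `m ≤_σ m'`, i.e. `m' - m ∈ σ^∨`. -/
def dualLe (n : ℕ) (σ : Cone n) (m m' : Fin n → ℤ) : Prop :=
  ∀ i ∈ σ.1, 0 ≤ pair n (m' - m) i

/-- `m ∈ σ^⊥`. -/
def inPerp (n : ℕ) (σ : Cone n) (m : Fin n → ℤ) : Prop :=
  ∀ i ∈ σ.1, pair n m i = 0

/-- `m <_σ m'`, i.e. `m ≤_σ m'` and `m' - m ∉ σ^⊥`. -/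
def dualLt (n : ℕ) (σ : Cone n) (m m' : Fin n → ℤ) : Prop :=
  dualLe n σ m m' ∧ ¬ inPerp n σ (m' - m)

/-- A family of multifiltrations of the `ℂ`-vector space `V`, indexed by the cones of the fan
of `ℙⁿ` and the characters `m ∈ M`. -/
structure MultiFilt (n : ℕ) (V : Type) [AddCommGroup V] [Module ℂ V] : Type where
  E : Cone n → (Fin n → ℤ) → Submodule ℂ V
  mono : ∀ σ m m', dualLe n σ m m' → E σ m ≤ E σ m'
  top_of_empty : ∀ σ : Cone n, σ.1 = ∅ → ∀ m, E σ m = ⊤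
  chain_bot : ∀ (σ : Cone n) (ms : ℤ → Fin n → ℤ),
    (∀ i : ℤ, dualLt n σ (ms (i - 1)) (ms i)) →
    ∃ i₀ : ℤ, ∀ i ≤ i₀, E σ (ms i) = ⊥
  finite_support : ∃ S : Finset (Cone n × (Fin n → ℤ)), ∀ (σ : Cone n) (m : Fin n → ℤ),
    ¬ (E σ m : Set V) ⊆ (⋃ m' ∈ {m' | dualLt n σ m' m}, (E σ m' : Set V)) →
    ∃ q ∈ S, q.1 = σ ∧ inPerp n σ (m - q.2)
  facet_union : ∀ σ τ : Cone n, τ.1 ⊆ σ.1 → τ.1.card + 1 = σ.1.card →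
    ∀ mτ : Fin n → ℤ, dualLe n σ 0 mτ → inPerp n τ mτ →
    (∀ w : Fin n → ℤ, inPerp n τ w ↔ ∃ (v : Fin n → ℤ) (k : ℤ), inPerp n σ v ∧ w = v + k • mτ) →
    ∀ m, E τ m = ⨆ i : ℕ, E σ (m + (i : ℤ) • mτ)

/-- A pointwise injection `E ⊆ F` of families of multifiltrations is elementary with
parameters `(k₀, σ₀, m₀)`. -/
structure IsElementary {n : ℕ} {V : Type} [AddCommGroup V] [Module ℂ V]
    (E F : MultiFilt n V) (k₀ : ℕ) (σ₀ : Cone n) (m₀ : Fin n → ℤ) : Prop where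
  le : ∀ σ m, E.E σ m ≤ F.E σ m
  dim : σ₀.1.card = k₀
  eq_of_lt : ∀ σ m, σ.1.card < k₀ → E.E σ m = F.E σ m
  ne_iff : ∀ (σ : Cone n) (m : Fin n → ℤ), σ.1.card = k₀ →
    (E.E σ m ≠ F.E σ m ↔ σ = σ₀ ∧ inPerp n σ₀ (m - m₀))
  rank_step : Module.finrank ℂ (F.E σ₀ m₀) = Module.finrank ℂ (E.E σ₀ m₀) + 1
  eq_of_gt : ∀ σ m, k₀ < σ.1.card → ¬(σ₀.1 ⊂ σ.1 ∧ dualLe n σ₀ m m₀) → E.E σ m = F.E σ m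
  inf_of_gt : ∀ σ m, k₀ < σ.1.card → σ₀.1 ⊂ σ.1 → dualLe n σ₀ m m₀ →
    E.E σ m = F.E σ m ⊓ E.E σ₀ m₀


lemma pair_sub (n : ℕ) (m m' : Fin n → ℤ) (i : Fin (n + 1)) :
    pair n (m - m') i = pair n m i - pair n m' i := by
  simp [pair, sub_mul, Finset.sum_sub_distrib]

lemma pair_add (n : ℕ) (m m' : Fin n → ℤ) (i : Fin (n + 1)) :
    pair n (m + m') i = pair n m i + pair n m' i := by
  simp [pair, add_mul, Finset.sum_add_distrib]

lemma pair_smul (n : ℕ) (k : ℤ) (m : Fin n → ℤ) (i : Fin (n + 1)) :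
    pair n (k • m) i = k * pair n m i := by
  simp [pair, Finset.mul_sum, mul_assoc]

/-- existence of the threshold `a` for the cone `τ = σ₀ + ρ`, independent of
the choice of the auxiliary character `w`. -/
theorem stmt3 (n : ℕ) (V : Type) [AddCommGroup V] [Module ℂ V] [FiniteDimensional ℂ V]
    (E F : MultiFilt n V) (k₀ : ℕ) (σ₀ : Cone n) (m₀ : Fin n → ℤ)
    (h : IsElementary E F k₀ σ₀ m₀) (hk : k₀ ≤ n - 1)
    (r : Fin (n + 1)) (hr : r ∉ σ₀.1) (hτ : insert r σ₀.1 ≠ Finset.univ) :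
    ∃ a : ℤ, ∀ w : Fin n → ℤ, (∀ i ∈ σ₀.1, pair n w i = 0) → pair n w r = 1 →
      ∀ i : ℤ,
        (Module.finrank ℂ (F.E ⟨insert r σ₀.1, hτ⟩ (m₀ + i • w)) =
          Module.finrank ℂ (E.E ⟨insert r σ₀.1, hτ⟩ (m₀ + i • w)) + 1 ↔ a ≤ i) := by
  set τ : Cone n := ⟨insert r σ₀.1, hτ⟩ with hτdef
  by_cases hwex : ∃ w : Fin n → ℤ, (∀ i ∈ σ₀.1, pair n w i = 0) ∧ pair n w r = 1
  swap
  · exact ⟨0, fun w hwσ hwr => absurd ⟨w, hwσ, hwr⟩ hwex⟩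
  obtain ⟨w₀, hw₀σ, hw₀r⟩ := hwex
  have hrτ : r ∈ τ.1 := Finset.mem_insert_self r σ₀.1
  have hcard : τ.1.card = k₀ + 1 := by
    simp only [hτdef, Finset.card_insert_of_notMem hr, h.dim]
  have hlt : k₀ < τ.1.card := by omega
  have hss : σ₀.1 ⊂ τ.1 := Finset.ssubset_insert hr
  set P : Submodule ℂ V := E.E σ₀ m₀ with hP
  -- diff helper
  have hdiff : ∀ (w : Fin n → ℤ) (i j : ℤ),
      (m₀ + j • w) - (m₀ + i • w) = (j - i) • w := by
    intro w i j; funext x; simp only [Pi.add_apply, Pi.sub_apply, Pi.smul_apply, smul_eq_mul]; ring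
  -- monotonicity in i for a fixed valid w
  have hmonole : ∀ (w : Fin n → ℤ), (∀ t ∈ σ₀.1, pair n w t = 0) → pair n w r = 1 →
      ∀ i j : ℤ, i ≤ j → dualLe n τ (m₀ + i • w) (m₀ + j • w) := by
    intro w hwσ hwr i j hij t ht
    rw [hdiff, pair_smul]
    rcases Finset.mem_insert.1 ht with rfl | ht
    · rw [hwr]; omega
    · rw [hwσ t ht]; omega
  -- E on τ at m₀ + i • w is F ⊓ P
  have hA : ∀ (w : Fin n → ℤ), (∀ t ∈ σ₀.1, pair n w t = 0) →
      ∀ i : ℤ, E.E τ (m₀ + i • w) = F.E τ (m₀ + i • w) ⊓ P := by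
    intro w hwσ i
    refine h.inf_of_gt τ (m₀ + i • w) hlt hss ?_
    intro t ht
    have : m₀ - (m₀ + i • w) = (-i) • w := by funext x; simp only [Pi.add_apply, Pi.sub_apply, Pi.smul_apply, smul_eq_mul]; ring
    rw [this, pair_smul, hwσ t ht]
    omega
  -- independence of w
  have hC : ∀ (w : Fin n → ℤ), (∀ t ∈ σ₀.1, pair n w t = 0) → pair n w r = 1 →
      ∀ i : ℤ, F.E τ (m₀ + i • w) = F.E τ (m₀ + i • w₀) := by
    intro w hwσ hwr i
    have key : ∀ (u u' : Fin n → ℤ), (∀ t ∈ σ₀.1, pair n u t = 0) → pair n u r = 1 →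
        (∀ t ∈ σ₀.1, pair n u' t = 0) → pair n u' r = 1 →
        dualLe n τ (m₀ + i • u) (m₀ + i • u') := by
      intro u u' huσ hur hu'σ hu'r t ht
      have : (m₀ + i • u') - (m₀ + i • u) = i • (u' - u) := by
        funext x; simp only [Pi.add_apply, Pi.sub_apply, Pi.smul_apply, smul_eq_mul]; ring
      rw [this, pair_smul, pair_sub]
      rcases Finset.mem_insert.1 ht with rfl | ht
      · rw [hur, hu'r]; simp
      · rw [huσ t ht, hu'σ t ht]; simp
    exact le_antisymm (F.mono τ _ _ (key w w₀ hwσ hwr hw₀σ hw₀r))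
      (F.mono τ _ _ (key w₀ w hw₀σ hw₀r hwσ hwr))
  -- facet union: F.E σ₀ m₀ = ⨆ i, F.E τ (m₀ + i • w₀)
  have hB : F.E σ₀ m₀ = ⨆ i : ℕ, F.E τ (m₀ + (i : ℤ) • w₀) := by
    refine F.facet_union τ σ₀ (Finset.subset_insert r σ₀.1) (by rw [hcard, h.dim]) w₀ ?_ hw₀σ ?_ m₀
    · intro t ht
      rw [show w₀ - 0 = w₀ by simp]
      rcases Finset.mem_insert.1 ht with rfl | ht
      · rw [hw₀r]; omega
      · rw [hw₀σ t ht]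
    · intro v
      constructor
      · intro hv
        refine ⟨v - (pair n v r) • w₀, pair n v r, ?_, by abel⟩
        intro t ht
        rw [pair_sub, pair_smul]
        rcases Finset.mem_insert.1 ht with rfl | ht
        · rw [hw₀r]; ring
        · rw [hv t ht, hw₀σ t ht]; ring
      · rintro ⟨x, k, hx, rfl⟩ t ht
        rw [pair_add, pair_smul, hx t (Finset.mem_insert_of_mem ht), hw₀σ t ht]
        ring
  -- the predicate
  set S : ℤ → Prop := fun i => ¬ F.E τ (m₀ + i • w₀) ≤ P with hS
  -- S is nonempty
  have hSne : ∃ i : ℤ, S i := by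
    by_contra hcon
    push_neg at hcon
    simp only [hS, not_not] at hcon
    have hsup : F.E σ₀ m₀ ≤ P := by
      rw [hB]
      exact iSup_le fun i => hcon (i : ℤ)
    have heq : F.E σ₀ m₀ = E.E σ₀ m₀ := le_antisymm hsup (h.le σ₀ m₀)
    have := h.rank_step
    rw [heq] at this
    omega
  -- S is bounded below
  have hchain : ∀ i : ℤ, dualLt n τ (m₀ + (i - 1) • w₀) (m₀ + i • w₀) := by
      intro i
      have hd : (m₀ + i • w₀) - (m₀ + (i - 1) • w₀) = w₀ := by
        funext x; simp only [Pi.add_apply, Pi.sub_apply, Pi.smul_apply, smul_eq_mul]; ring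
      constructor
      · intro t ht
        rw [hd]
        rcases Finset.mem_insert.1 ht with rfl | ht
        · rw [hw₀r]; omega
        · rw [hw₀σ t ht]
      · intro hperp
        have := hperp r hrτ
        rw [hd, hw₀r] at this
        omega
  have hSbdd : ∃ b : ℤ, ∀ z : ℤ, S z → b ≤ z := by
    obtain ⟨i₀, hi₀⟩ := F.chain_bot τ (fun i => m₀ + i • w₀) hchain
    refine ⟨i₀ + 1, fun z hz => ?_⟩
    by_contra hzb
    have hz0 : z ≤ i₀ := by omega
    exact hz (by rw [hi₀ z hz0]; exact bot_le)
  obtain ⟨a, haS, hamin⟩ := Int.exists_least_of_bdd hSbdd hSne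
  refine ⟨a, fun w hwσ hwr i => ?_⟩
  have hFw := hC w hwσ hwr i
  have hEw := hA w hwσ i
  -- goal in terms of A := F.E τ (m₀ + i • w₀)
  constructor
  · intro hdim
    by_contra hai
    have hnSi : ¬ S i := fun hSi => hai (hamin i hSi)
    simp only [hS, not_not] at hnSi
    have : F.E τ (m₀ + i • w) ⊓ P = F.E τ (m₀ + i • w) := by
      rw [hFw]; exact inf_eq_left.2 hnSi
    rw [hEw, this] at hdim
    omega
  · intro hai
    have hSi : S i := by
      intro hle
      exact haS (le_trans (F.mono τ _ _ (hmonole w₀ hw₀σ hw₀r a i hai)) hle)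
    set A : Submodule ℂ V := F.E τ (m₀ + i • w₀) with hAdef
    have hAQ : A ≤ F.E σ₀ m₀ := by
      rw [hB]
      have h1 : A ≤ F.E τ (m₀ + (i.toNat : ℤ) • w₀) :=
        F.mono τ _ _ (hmonole w₀ hw₀σ hw₀r i i.toNat (Int.self_le_toNat i))
      exact le_trans h1 (le_iSup (fun j : ℕ => F.E τ (m₀ + (j : ℤ) • w₀)) i.toNat)
    have hsup_le : A ⊔ P ≤ F.E σ₀ m₀ := sup_le hAQ (le_trans (h.le σ₀ m₀) ?_)
    swap
    · exact le_refl _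
    have hmod : Module.finrank ℂ ↥(A ⊔ P) + Module.finrank ℂ ↥(A ⊓ P) =
        Module.finrank ℂ A + Module.finrank ℂ P :=
      Submodule.finrank_sup_add_finrank_inf_eq A P
    have hsup_rank : Module.finrank ℂ ↥(A ⊔ P) ≤ Module.finrank ℂ (F.E σ₀ m₀) :=
      Submodule.finrank_mono hsup_le
    have hQ := h.rank_step
    have hinf_lt : A ⊓ P < A := lt_of_le_of_ne inf_le_left (by
      intro heq
      exact hSi (heq.symm.trans_le inf_le_right))
    have hrank_lt : Module.finrank ℂ ↥(A ⊓ P) < Module.finrank ℂ A :=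
      Submodule.finrank_lt_finrank_of_lt hinf_lt
    rw [← hP] at hQ
    rw [hEw, hFw]
    omega

end Toric
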